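/- For every c ∈ (0,1), the acceptance region of the maximum p-value test with K = 2 studies, namely the set { (z₁, z₂) ∈ ℝ² : max(p(z₁), p(z₂)) > c }, where p(z) = 2(1 − Φ(|z|)), is not a convex subset of ℝ². -/

import Mathlib

/-!
Since `p(0) = 1 > c`, the acceptance region contains the points `(0, 2t)` and `(2t, 0)` for every
`t`. Since `p(t) → 0` as `t → ∞`, we may pick `t` with `p(t) ≤ c`, and then the midpoint `(t, t)`
is rejected.
-/

/-- The standard normal density φ(t) = (1/√(2π))·exp(−t²/2). -/
noncomputable def stdNormalPDF (t : ℝ) : ℝ :=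
  (Real.sqrt (2 * Real.pi))⁻¹ * Real.exp (-t ^ 2 / 2)

/-- The standard normal cumulative distribution function Φ(t) = ∫_{−∞}^t φ(s) ds. -/
noncomputable def stdNormalCDF (t : ℝ) : ℝ :=
  ∫ s in Set.Iic t, stdNormalPDF s

/-- The two-sided p-value function p(z) = 2(1 − Φ(|z|)). -/
noncomputable def pValue (z : ℝ) : ℝ := 2 * (1 - stdNormalCDF |z|)

open MeasureTheory Set Filter Topology

theorem not_convex_setOf_max_apply_gt {E : Type*} [AddCommGroup E] [Module ℝ E]
    {f : E → ℝ} {c : ℝ} {t : E} (h₀ : c < f 0) (ht : f t ≤ c) :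
    ¬ Convex ℝ {z : E × E | max (f z.1) (f z.2) > c} := by
  intro hconv
  have hmid := hconv (x := (0, (2 : ℝ) • t)) (y := ((2 : ℝ) • t, 0))
    (lt_max_of_lt_left h₀) (lt_max_of_lt_right h₀) (a := 1 / 2) (b := 1 / 2)
    (by norm_num) (by norm_num) (by norm_num)
  have hmid_eq : (1 / 2 : ℝ) • ((0 : E), (2 : ℝ) • t) + (1 / 2 : ℝ) • ((2 : ℝ) • t, (0 : E))
      = (t, t) := by
    ext <;> simp [smul_smul]
  rw [hmid_eq, mem_ofPred_eq, max_self] at hmid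
  exact hmid.not_ge ht

lemma stdNormalPDF_eq_gaussianPDFReal : stdNormalPDF = ProbabilityTheory.gaussianPDFReal 0 1 := by
  ext x
  simp [stdNormalPDF, ProbabilityTheory.gaussianPDFReal]

lemma integrable_stdNormalPDF : Integrable stdNormalPDF := by
  rw [stdNormalPDF_eq_gaussianPDFReal]
  exact ProbabilityTheory.integrable_gaussianPDFReal 0 1

lemma integral_stdNormalPDF : ∫ x, stdNormalPDF x = 1 := by
  rw [stdNormalPDF_eq_gaussianPDFReal]
  exact ProbabilityTheory.integral_gaussianPDFReal_eq_one 0 one_ne_zero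

lemma stdNormalPDF_neg (x : ℝ) : stdNormalPDF (-x) = stdNormalPDF x := by
  simp [stdNormalPDF]

lemma stdNormalCDF_zero : stdNormalCDF 0 = 1 / 2 := by
  have hsymm : stdNormalCDF 0 = ∫ x in Ioi 0, stdNormalPDF x := by
    rw [stdNormalCDF, ← neg_zero, ← integral_comp_neg_Iic, neg_zero]
    simp only [stdNormalPDF_neg]
  have hsum : stdNormalCDF 0 + ∫ x in Ioi 0, stdNormalPDF x = 1 := by
    rw [stdNormalCDF, ← setIntegral_union (Iic_disjoint_Ioi le_rfl) measurableSet_Ioi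
        integrable_stdNormalPDF.integrableOn integrable_stdNormalPDF.integrableOn,
      Iic_union_Ioi, setIntegral_univ, integral_stdNormalPDF]
  linarith

lemma tendsto_stdNormalCDF_atTop : Tendsto stdNormalCDF atTop (𝓝 1) := by
  have h := tendsto_setIntegral_of_monotone (μ := volume) (f := stdNormalPDF)
    (fun _ ↦ measurableSet_Iic) (fun _ _ ↦ Iic_subset_Iic.mpr)
    (by rw [iUnion_Iic]; exact integrable_stdNormalPDF.integrableOn)
  rwa [iUnion_Iic, setIntegral_univ, integral_stdNormalPDF] at h

lemma pValue_zero : pValue 0 = 1 := by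
  norm_num [pValue, stdNormalCDF_zero]

lemma tendsto_pValue_atTop : Tendsto pValue atTop (𝓝 0) := by
  have h : Tendsto (fun t ↦ 2 * (1 - stdNormalCDF t)) atTop (𝓝 0) := by
    simpa using ((tendsto_const_nhds (x := (1 : ℝ))).sub tendsto_stdNormalCDF_atTop).const_mul 2
  refine h.congr' ?_
  filter_upwards [eventually_ge_atTop 0] with t ht
  rw [pValue, abs_of_nonneg ht]

/-- For every c ∈ (0,1), the acceptance region of the maximum p-value test with K = 2
studies, { (z₁, z₂) ∈ ℝ² : max(p(z₁), p(z₂)) > c }, is not a convex subset of ℝ². -/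
theorem stmt_7 (c : ℝ) (hc : c ∈ Set.Ioo (0 : ℝ) 1) :
    ¬ Convex ℝ {z : ℝ × ℝ | max (pValue z.1) (pValue z.2) > c} := by
  obtain ⟨t, ht⟩ := (tendsto_pValue_atTop.eventually (eventually_le_nhds hc.1)).exists
  exact not_convex_setOf_max_apply_gt (pValue_zero ▸ hc.2) ht
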